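/- Let n ≥ 5, let σ := (1 2)(3 4) ∈ A_n, and let X_n ⊆ A_n be the conjugacy class of σ in A_n. Then pw(A_n, X_n) ≥ n/4: there exists g ∈ A_n such that whenever g is written as a product of k palindromes with respect to X_n, one has 4k ≥ n. -/
import Mathlib


/-- An element `g` of a group `G` is a palindrome with respect to `X ⊆ G` if `g` is the
product of some word over `X^{±1}` that equals its own reverse. -/
def IsPalindrome {G : Type*} [Group G] (X : Set G) (g : G) : Prop :=
  ∃ l : List G, (∀ t ∈ l, t ∈ X ∪ X⁻¹) ∧ l.reverse = l ∧ l.prod = g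

open Equiv Equiv.Perm Finset


/-- A palindromic word in letters that are involutions conjugate to `s` has product `1`
or conjugate to `s`. -/
lemma pal_key {G : Type*} [Group G] (s : G)
    (m : ℕ) : ∀ l : List G, l.length = m → l.reverse = l →
    (∀ t ∈ l, IsConj s t) → (∀ t ∈ l, t * t = 1) →
    l.prod = 1 ∨ IsConj s l.prod := by
  induction m using Nat.strong_induction_on with
  | _ m ih =>
  intro l hlen hrev hconj hinv
  rcases l with _ | ⟨t, l'⟩
  · left; rfl
  rcases eq_or_ne l' [] with rfl | hne
  · right; simpa using hconj t (by simp)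
  have hd : l'.dropLast ++ [l'.getLast hne] = l' := List.dropLast_append_getLast hne
  set d := l'.dropLast with hdd
  set s' := l'.getLast hne with hs'
  have hrev2 : (l'.getLast hne) :: (d.reverse ++ [t]) = t :: (d ++ [s']) := by
    have : (t :: l').reverse = t :: l' := hrev
    rw [← hd] at this
    simpa using this
  have hts : s' = t := by
    have := (List.cons.injEq _ _ _ _).mp hrev2
    exact this.1.symm ▸ rfl
  have hdr : d.reverse = d := by
    have h2 := ((List.cons.injEq _ _ _ _).mp hrev2).2
    rw [hts] at h2
    exact List.append_cancel_right h2
  have hmemd : ∀ x ∈ d, x ∈ t :: l' := by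
    intro x hx
    exact List.mem_cons_of_mem _ (by rw [← hd]; exact List.mem_append_left _ hx)
  have hlend : d.length < m := by
    have : l'.length = d.length + 1 := by rw [← hd]; simp
    simp only [List.length_cons] at hlen; omega
  have hIH := ih d.length hlend d rfl hdr
    (fun x hx => hconj x (hmemd x hx)) (fun x hx => hinv x (hmemd x hx))
  have htinv : t * t = 1 := hinv t (by simp)
  have hprod : (t :: l').prod = t * d.prod * t := by
    rw [← hd, hts]; simp [mul_assoc]
  rcases hIH with h1 | h2
  · left; rw [hprod, h1, mul_one, htinv]
  · right
    have hti : t⁻¹ = t := by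
      rw [← mul_one t⁻¹, ← htinv, ← mul_assoc, inv_mul_cancel, one_mul]
    have he : (t :: l').prod = t * d.prod * t⁻¹ := by rw [hprod, hti]
    exact h2.trans (he ▸ isConj_iff.mpr ⟨t, rfl⟩)


/-- Let `n ≥ 5`, `σ = (1 2)(3 4) ∈ A_n`, and let `X_n` be the conjugacy
class of `σ` in `A_n`. Then `pw(A_n, X_n) ≥ n/4`: there is a `g ∈ A_n` such that whenever
`g` is a product of `k` palindromes with respect to `X_n`, one has `4k ≥ n`. -/
theorem palindromic_width_of_alternating_group_lower_bound
    (n : ℕ) (hn : 5 ≤ n)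
    (σ : Equiv.Perm (Fin n))
    (hσ : σ = Equiv.swap ⟨0, by omega⟩ ⟨1, by omega⟩ * Equiv.swap ⟨2, by omega⟩ ⟨3, by omega⟩)
    (hmem : σ ∈ alternatingGroup (Fin n))
    (X : Set (alternatingGroup (Fin n)))
    (hX : X = {τ : alternatingGroup (Fin n) | IsConj (⟨σ, hmem⟩ : alternatingGroup (Fin n)) τ}) :
    ∃ g : alternatingGroup (Fin n), ∀ k : ℕ, ∀ ps : List (alternatingGroup (Fin n)),
      ps.length = k → (∀ p ∈ ps, IsPalindrome X p) → ps.prod = g → n ≤ 4 * k := by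
  obtain ⟨n', rfl⟩ : ∃ n', n = n' + 1 := ⟨n - 1, by omega⟩
  set a : Fin (n' + 1) := ⟨0, by omega⟩
  set b : Fin (n' + 1) := ⟨1, by omega⟩
  set c : Fin (n' + 1) := ⟨2, by omega⟩
  set e : Fin (n' + 1) := ⟨3, by omega⟩
  have hab : a ≠ b := fun h => by simpa [a, b, Fin.ext_iff] using h
  have hce : c ≠ e := fun h => by simpa [c, e, Fin.ext_iff] using h
  -- the two swaps are disjoint, hence commute
  have hdisj : Equiv.Perm.Disjoint (Equiv.swap a b) (Equiv.swap c e) := by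
    intro x
    by_cases hx : x = a ∨ x = b
    · right
      rcases hx with rfl | rfl
      · exact Equiv.swap_apply_of_ne_of_ne (fun h => by simpa [a, c, Fin.ext_iff] using h)
          (fun h => by simpa [a, e, Fin.ext_iff] using h)
      · exact Equiv.swap_apply_of_ne_of_ne (fun h => by simpa [b, c, Fin.ext_iff] using h)
          (fun h => by simpa [b, e, Fin.ext_iff] using h)
    · left
      push_neg at hx
      exact Equiv.swap_apply_of_ne_of_ne hx.1 hx.2
  have hcomm : Commute (Equiv.swap c e) (Equiv.swap a b) := hdisj.commute.symm
  have hσσ : σ * σ = 1 := by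
    rw [hσ, hcomm.mul_mul_mul_comm, Equiv.swap_mul_self, Equiv.swap_mul_self, one_mul]
  have hsupp : σ.support.card ≤ 4 := by
    calc σ.support.card ≤ ((Equiv.swap a b).support ∪ (Equiv.swap c e).support).card := by
          refine Finset.card_le_card ?_
          rw [hσ]; exact Equiv.Perm.support_mul_le _ _
      _ ≤ (Equiv.swap a b).support.card + (Equiv.swap c e).support.card :=
          Finset.card_union_le _ _
      _ ≤ 4 := by
          rw [Equiv.Perm.support_swap hab, Equiv.Perm.support_swap hce]
          have h1 : ({a, b} : Finset (Fin (n' + 1))).card ≤ 2 :=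
            (Finset.card_insert_le _ _).trans (by simp)
          have h2 : ({c, e} : Finset (Fin (n' + 1))).card ≤ 2 :=
            (Finset.card_insert_le _ _).trans (by simp)
          omega
  set σ' : alternatingGroup (Fin (n' + 1)) := ⟨σ, hmem⟩ with hσ'
  have hσ'σ' : σ' * σ' = 1 := by
    apply Subtype.ext
    simpa using hσσ
  have hσ'inv : σ'⁻¹ = σ' := inv_eq_of_mul_eq_one_right hσ'σ'
  -- letters in X ∪ X⁻¹ are conjugate to σ' and are involutions
  have hletter : ∀ t : alternatingGroup (Fin (n' + 1)), t ∈ X ∪ X⁻¹ → IsConj σ' t := by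
    intro t ht
    rcases ht with ht | ht
    · rw [hX] at ht; exact ht
    · have ht' : t⁻¹ ∈ X := ht
      rw [hX] at ht'
      obtain ⟨u, hu⟩ := isConj_iff.mp ht'
      refine isConj_iff.mpr ⟨u, ?_⟩
      have : t = (u * σ' * u⁻¹)⁻¹ := by rw [hu, inv_inv]
      rw [this]
      simp [mul_inv_rev, hσ'inv, mul_assoc]
  have hinvol : ∀ t : alternatingGroup (Fin (n' + 1)), IsConj σ' t → t * t = 1 := by
    intro t ht
    obtain ⟨u, hu⟩ := isConj_iff.mp ht
    have : t * t = u * (σ' * σ') * u⁻¹ := by rw [← hu]; group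
    rw [this, hσ'σ']; simp
  -- each palindrome is 1 or conjugate to σ', hence its support has size ≤ 4
  have hp4 : ∀ p : alternatingGroup (Fin (n' + 1)), IsPalindrome X p →
      ((p : Equiv.Perm (Fin (n' + 1))).support.card ≤ 4) := by
    intro p hp
    obtain ⟨l, hl1, hl2, hl3⟩ := hp
    have hconj := fun t ht => hletter t (hl1 t ht)
    have := pal_key σ' l.length l rfl hl2 hconj (fun t ht => hinvol t (hconj t ht))
    rw [hl3] at this
    rcases this with h1 | h2
    · rw [h1]; simp
    · obtain ⟨u, hu⟩ := isConj_iff.mp h2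
      have : (p : Equiv.Perm (Fin (n' + 1))) =
          (u : Equiv.Perm (Fin (n' + 1))) * σ * (u : Equiv.Perm (Fin (n' + 1)))⁻¹ := by
        rw [← hu]; rfl
      rw [this, Equiv.Perm.card_support_conj]
      exact hsupp
  -- product of k palindromes has support of size ≤ 4k
  have hbound : ∀ ps : List (alternatingGroup (Fin (n' + 1))), (∀ p ∈ ps, IsPalindrome X p) →
      ((ps.prod : Equiv.Perm (Fin (n' + 1))).support.card ≤ 4 * ps.length) := by
    intro ps
    induction ps with
    | nil => intro _; simp
    | cons p ps ihp =>
      intro hps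
      have h1 : ((p * ps.prod : alternatingGroup (Fin (n' + 1))) : Equiv.Perm (Fin (n' + 1))) =
          (p : Equiv.Perm (Fin (n' + 1))) * (ps.prod : Equiv.Perm (Fin (n' + 1))) := rfl
      calc ((List.prod (p :: ps) : alternatingGroup (Fin (n' + 1))) :
            Equiv.Perm (Fin (n' + 1))).support.card
          ≤ ((p : Equiv.Perm (Fin (n' + 1))).support ∪
            (ps.prod : Equiv.Perm (Fin (n' + 1))).support).card := by
            refine Finset.card_le_card ?_
            rw [List.prod_cons, h1]
            exact Equiv.Perm.support_mul_le _ _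
        _ ≤ (p : Equiv.Perm (Fin (n' + 1))).support.card +
            (ps.prod : Equiv.Perm (Fin (n' + 1))).support.card := Finset.card_union_le _ _
        _ ≤ 4 + 4 * ps.length := by
            have := hp4 p (hps p (by simp))
            have := ihp (fun q hq => hps q (List.mem_cons_of_mem _ hq))
            omega
        _ = 4 * (p :: ps).length := by simp [List.length_cons]; ring
  -- choose g : a long even cycle
  set m : ℕ := if (n' + 1) % 2 = 1 then n' else n' - 1 with hm
  have hm3 : 3 ≤ m := by rw [hm]; split <;> omega
  have hmlt : m < n' + 1 := by rw [hm]; split <;> omega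
  have hme : m % 2 = 0 := by rw [hm]; split <;> omega
  set i : Fin (n' + 1) := ⟨m, hmlt⟩ with hi
  have hsign : Equiv.Perm.sign (Fin.cycleRange i) = 1 := by
    rw [Fin.sign_cycleRange]
    exact Even.neg_one_pow (Nat.even_iff.mpr hme)
  refine ⟨⟨Fin.cycleRange i, Equiv.Perm.mem_alternatingGroup.mpr hsign⟩, ?_⟩
  intro k ps hlen hpal hprod
  have hIic : Finset.Iic i ⊆ (Fin.cycleRange i).support := by
    intro j hj
    rw [Equiv.Perm.mem_support]
    rcases lt_or_eq_of_le (Finset.mem_Iic.mp hj) with hlt | heq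
    · have hval := Fin.coe_cycleRange_of_lt hlt
      intro hcon
      rw [hcon] at hval
      omega
    · rw [heq, Fin.cycleRange_self]
      intro hcon
      have := congrArg Fin.val hcon
      simp [hi] at this
      omega
  have hcard : m + 1 ≤ (Fin.cycleRange i).support.card := by
    have := Finset.card_le_card hIic
    rwa [Fin.card_Iic] at this
  have hle : (Fin.cycleRange i).support.card ≤ 4 * k := by
    have h := hbound ps hpal
    rw [hprod, hlen] at h
    exact h
  rw [hm] at hcard
  by_cases hpar : (n' + 1) % 2 = 1
  · rw [if_pos hpar] at hcard; omega
  · rw [if_neg hpar] at hcard; omega
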